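/- The Jordan triple determinants on the ball and the half plane are related by the Cayley transform: for z, w ∈ H, Δ'(z,w) := z₁ + conj(w₁) - w₂* z₂ equals Δ(R^{-1}z, R^{-1}w) · j(R^{-1},z)^{-1} · conj(j(R^{-1},w))^{-1}, where Δ(z,w) = 1 - w*z, j(R^{-1}, w) = √2/(1 + w₁), and R^{-1} is the inverse Cayley transform mapping H to the unit ball B. -/

import Mathlib

noncomputable section

/-- The inverse Cayley transform `w ↦ ((w₁-1)/(w₁+1), √2 w₂/(1+w₁))`,
mapping the generalized right half plane `H` to the unit ball `B`. -/
def cayleyInv (m : ℕ) (w : ℂ × (Fin m → ℂ)) : ℂ × (Fin m → ℂ) :=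
  ((w.1 - 1) / (w.1 + 1), fun i => (Real.sqrt 2 : ℂ) * w.2 i / (1 + w.1))

/-- The cocycle factor `j(R⁻¹, w) = √2/(1 + w₁)` of the inverse Cayley
transform. -/
def jcayleyInv (m : ℕ) (w : ℂ × (Fin m → ℂ)) : ℂ :=
  (Real.sqrt 2 : ℂ) / (1 + w.1)

/-- The Jordan triple determinant `Δ(z,w) = 1 - w*z` on the ball. -/
def JdetB (m : ℕ) (z w : ℂ × (Fin m → ℂ)) : ℂ :=
  1 - (star w.1 * z.1 + ∑ k, star (w.2 k) * z.2 k)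

/-- The Jordan triple determinant `Δ'(z,w) = z₁ + conj w₁ - w₂* z₂` on `H`. -/
def JdetH (m : ℕ) (z w : ℂ × (Fin m → ℂ)) : ℂ :=
  z.1 + star w.1 - ∑ k, star (w.2 k) * z.2 k

lemma one_add_ne_zero {a : ℂ} (ha : a.re > 0) : 1 + a ≠ 0 := by
  intro h
  have : (1 + a).re = 0 := by rw [h]; simp
  simp [Complex.add_re] at this
  linarith

/-- The Jordan triple determinants of the ball and the half plane are related
by the Cayley transform:
`Δ'(z,w) = Δ(R⁻¹z, R⁻¹w) · j(R⁻¹,z)⁻¹ · conj(j(R⁻¹,w))⁻¹` for `z, w ∈ H`. -/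
theorem stmt_8 (m : ℕ) (z w : ℂ × (Fin m → ℂ))
    (hz : z.1.re > (∑ k, ‖z.2 k‖ ^ 2) / 2)
    (hw : w.1.re > (∑ k, ‖w.2 k‖ ^ 2) / 2) :
    JdetH m z w =
      JdetB m (cayleyInv m z) (cayleyInv m w) *
        (jcayleyInv m z)⁻¹ * ((starRingEnd ℂ) (jcayleyInv m w))⁻¹ := by
  have hzs : (0:ℝ) ≤ ∑ k, ‖z.2 k‖ ^ 2 := Finset.sum_nonneg fun k _ => sq_nonneg _
  have hws : (0:ℝ) ≤ ∑ k, ‖w.2 k‖ ^ 2 := Finset.sum_nonneg fun k _ => sq_nonneg _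
  have hz1 : 1 + z.1 ≠ 0 := one_add_ne_zero (by linarith)
  have hw1 : 1 + w.1 ≠ 0 := one_add_ne_zero (by linarith)
  have hw1' : 1 + starRingEnd ℂ w.1 ≠ 0 := by
    intro h
    apply hw1
    have := congrArg (starRingEnd ℂ) h
    simpa using this
  have hs2 : ((Real.sqrt 2 : ℝ) : ℂ) ≠ 0 := by
    norm_cast
    positivity
  have hsq : ((Real.sqrt 2 : ℝ) : ℂ) ^ 2 = 2 := by
    rw [← Complex.ofReal_pow, Real.sq_sqrt (by norm_num : (0:ℝ) ≤ 2)]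
    norm_num
  set c := starRingEnd ℂ w.1 with hc
  set S := ∑ k, starRingEnd ℂ (w.2 k) * z.2 k with hS
  simp only [JdetH, JdetB, cayleyInv, jcayleyInv, map_div₀, map_add, map_one]
  simp only [star_mul', star_div₀, ← Finset.sum_div, Finset.mul_sum]
  have key : ∀ k, starRingEnd ℂ ((Real.sqrt 2:ℝ):ℂ) * starRingEnd ℂ (w.2 k) / starRingEnd ℂ (1 + w.1) *
      (((Real.sqrt 2:ℝ):ℂ) * z.2 k / (1 + z.1)) =
      2 * (starRingEnd ℂ (w.2 k) * z.2 k) / ((1 + c) * (1 + z.1)) := by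
    intro k
    rw [map_add, map_one, Complex.conj_ofReal, ← hc]
    field_simp
    ring_nf
    rw [hsq]
    ring
  simp only [Complex.star_def]
  rw [Finset.sum_congr rfl (fun k _ => key k)]
  rw [← Finset.sum_div, ← Finset.mul_sum, ← hS]
  simp only [map_sub, map_add, map_one, Complex.conj_ofReal, ← hc]
  have hc1 : c + 1 ≠ 0 := by rw [add_comm]; exact hw1'
  have hz1' : z.1 + 1 ≠ 0 := by rw [add_comm]; exact hz1
  have star_eq : (1 : ℂ) - ((c - 1) / (c + 1) * ((z.1 - 1) / (z.1 + 1)) +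
      2 * S / ((1 + c) * (1 + z.1))) = 2 * (z.1 + c - S) / ((1 + c) * (1 + z.1)) := by
    field_simp
    ring
  rw [star_eq, inv_div, inv_div]
  field_simp
  ring_nf
  rw [hsq]
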